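/- Let q = p^e be a prime power, m = 2, and consider the invariants y_{k'} = ∑_{i=k'}^{q} x_1^{(q+k'-i)(q-1)} x_2^{i(q-1)} in Q = F_q[x_1,x_2]/(x_1^{q^2},x_2^{q^2}) for 0 ≤ k' ≤ q. Then for 0 ≤ k' < q, the first Steenrod operation satisfies P^1(y_{k'}) = (1 - k) · y_{k'+1} in Q, where k = k' + q. -/
import Mathlib


open MvPolynomial Finset

/-- The total Steenrod operation `P(ξ) : f ↦ f(x_1 + x_1^q ξ, x_2 + x_2^q ξ)`. -/
noncomputable def steenrod (F : Type) [Field F] (n q : ℕ) :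
    MvPolynomial (Fin n) F →ₐ[F] Polynomial (MvPolynomial (Fin n) F) :=
  MvPolynomial.aeval fun i =>
    Polynomial.C (MvPolynomial.X i) +
      Polynomial.C (MvPolynomial.X i ^ q) * Polynomial.X

/-- The ideal `(x_1^N, …, x_n^N)`. -/
noncomputable def frobIdeal (F : Type) [Field F] (n N : ℕ) :
    Ideal (MvPolynomial (Fin n) F) :=
  Ideal.span (Set.range fun i : Fin n => (MvPolynomial.X i : MvPolynomial (Fin n) F) ^ N)

/-- `y_{k'} = ∑_{i=k'}^{q} x_1^{(q+k'-i)(q-1)} x_2^{i(q-1)}` (the case `m = 2`). -/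
noncomputable def yInv (F : Type) [Field F] (q k' : ℕ) : MvPolynomial (Fin 2) F :=
  ∑ i ∈ Finset.Icc k' q,
    MvPolynomial.X 0 ^ ((q + k' - i) * (q - 1)) * MvPolynomial.X 1 ^ (i * (q - 1))

lemma coeff0_pow {R : Type*} [CommRing R] (u v : R) (n : ℕ) :
    ((Polynomial.C u + Polynomial.C v * Polynomial.X) ^ n).coeff 0 = u ^ n := by
  rw [Polynomial.coeff_zero_eq_eval_zero]
  simp

lemma coeff1_pow {R : Type*} [CommRing R] (u v : R) (n : ℕ) :
    ((Polynomial.C u + Polynomial.C v * Polynomial.X) ^ n).coeff 1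
      = (n : R) * u ^ (n - 1) * v := by
  induction n with
  | zero => simp [Polynomial.coeff_one]
  | succ n ih =>
    rw [pow_succ, Polynomial.coeff_mul,
      Finset.Nat.sum_antidiagonal_eq_sum_range_succ_mk,
      Finset.sum_range_succ, Finset.sum_range_one, ih, coeff0_pow]
    simp only [Nat.sub_zero, Nat.sub_self]
    have h0 : (Polynomial.C u + Polynomial.C v * Polynomial.X).coeff 0 = u := by simp
    have h1 : (Polynomial.C u + Polynomial.C v * Polynomial.X).coeff 1 = v := by simp
    rw [h0, h1]
    cases n with
    | zero => simp
    | succ m =>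
      push_cast
      ring

lemma steen_mono (F : Type) [Field F] (q a b : ℕ) :
    ((steenrod F 2 q (X 0 ^ a * X 1 ^ b)).coeff 1 : MvPolynomial (Fin 2) F)
      = ((a : ℕ) : F) • (X 0 ^ (a - 1 + q) * X 1 ^ b)
        + ((b : ℕ) : F) • (X 0 ^ a * X 1 ^ (b - 1 + q)) := by
  simp only [steenrod, map_mul, map_pow, aeval_X]
  rw [Polynomial.coeff_mul, Finset.Nat.sum_antidiagonal_eq_sum_range_succ_mk,
    Finset.sum_range_succ, Finset.sum_range_one]
  norm_num
  simp only [← Polynomial.C_pow]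
  rw [coeff0_pow, coeff1_pow, coeff0_pow, coeff1_pow]
  simp only [MvPolynomial.smul_eq_C_mul, map_natCast, pow_add]
  ring

/-- in `Q = F_q[x_1,x_2]/(x_1^{q^2},x_2^{q^2})`, the first Steenrod
operation satisfies `P^1(y_{k'}) = (1-k)·y_{k'+1}` for `0 ≤ k' < q`, where `k = k' + q`
and the scalar `1 - k` is taken in `F_q`. -/
theorem statement16 (F : Type) [Field F] [Fintype F] (q : ℕ) (hq : Fintype.card F = q)
    (k' : ℕ) (hk' : k' < q) :
    Ideal.Quotient.mk (frobIdeal F 2 (q ^ 2)) ((steenrod F 2 q (yInv F q k')).coeff 1)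
      = ((1 : F) - ((k' + q : ℕ) : F)) •
          Ideal.Quotient.mk (frobIdeal F 2 (q ^ 2)) (yInv F q (k' + 1)) := by
  have hq2 : 2 ≤ q := by
    rw [← hq]; exact Fintype.one_lt_card
  have hq1 : 1 ≤ q := by omega
  have hqF : ((q : ℕ) : F) = 0 := by rw [← hq]; exact Nat.cast_card_eq_zero F
  have hesub : ∀ t : ℕ, 1 ≤ t → t * (q - 1) - 1 + q = (t + 1) * (q - 1) := by
    intro t ht
    have hge : 1 * (q - 1) ≤ t * (q - 1) := Nat.mul_le_mul_right _ ht
    rw [one_mul] at hge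
    rw [show (t + 1) * (q - 1) = t * (q - 1) + (q - 1) from by ring]
    generalize t * (q - 1) = A at hge ⊢
    omega
  have hmap : Finset.Icc (k' + 1) q
      = Finset.map ⟨(· + 1), add_left_injective 1⟩ (Finset.Icc k' (q - 1)) := by
    ext x
    simp only [Finset.mem_Icc, Finset.mem_map, Function.Embedding.coeFn_mk]
    constructor
    · rintro ⟨h1, h2⟩; exact ⟨x - 1, by omega, by omega⟩
    · rintro ⟨y, ⟨h1, h2⟩, rfl⟩; omega
  have key : (steenrod F 2 q (yInv F q k')).coeff 1
      = ((1 : F) - ((k' + q : ℕ) : F)) • yInv F q (k' + 1) := by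
    rw [yInv, map_sum, Polynomial.finset_sum_coeff]
    simp only [steen_mono]
    rw [Finset.sum_add_distrib]
    have hA : (∑ i ∈ Finset.Icc k' q, (((q + k' - i) * (q - 1) : ℕ) : F) •
          (X 0 ^ ((q + k' - i) * (q - 1) - 1 + q) * X 1 ^ (i * (q - 1)) : MvPolynomial (Fin 2) F))
        = ∑ i ∈ Finset.Icc k' (q - 1), (((q + k' - (i + 1)) * (q - 1) : ℕ) : F) •
          (X 0 ^ ((q + k' - i) * (q - 1)) * X 1 ^ ((i + 1) * (q - 1))) := by
      have hsplit : Finset.Icc k' q = insert k' (Finset.Icc (k' + 1) q) := by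
        ext x; simp only [Finset.mem_Icc, Finset.mem_insert]; omega
      rw [hsplit, Finset.sum_insert (by simp)]
      have hz : (((q + k' - k') * (q - 1) : ℕ) : F) = 0 := by
        have h : q + k' - k' = q := by omega
        rw [h, Nat.cast_mul, hqF, zero_mul]
      rw [hz, zero_smul, zero_add, hmap, Finset.sum_map]
      refine Finset.sum_congr rfl fun i hi => ?_
      simp only [Finset.mem_Icc] at hi
      simp only [Function.Embedding.coeFn_mk]
      by_cases hc : q + k' - (i + 1) = 0
      · rw [hc]
        simp
      · have e1 : (q + k' - (i + 1)) * (q - 1) - 1 + q = (q + k' - i) * (q - 1) := by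
          rw [hesub (q + k' - (i + 1)) (by omega)]
          congr 2
          omega
        rw [e1]
    have hB : (∑ i ∈ Finset.Icc k' q, ((i * (q - 1) : ℕ) : F) •
          (X 0 ^ ((q + k' - i) * (q - 1)) * X 1 ^ (i * (q - 1) - 1 + q) : MvPolynomial (Fin 2) F))
        = ∑ i ∈ Finset.Icc k' (q - 1), ((i * (q - 1) : ℕ) : F) •
          (X 0 ^ ((q + k' - i) * (q - 1)) * X 1 ^ ((i + 1) * (q - 1))) := by
      have step : (∑ i ∈ Finset.Icc k' q, ((i * (q - 1) : ℕ) : F) •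
            (X 0 ^ ((q + k' - i) * (q - 1)) * X 1 ^ (i * (q - 1) - 1 + q) : MvPolynomial (Fin 2) F))
          = ∑ i ∈ Finset.Icc k' q, ((i * (q - 1) : ℕ) : F) •
            (X 0 ^ ((q + k' - i) * (q - 1)) * X 1 ^ ((i + 1) * (q - 1))) := by
        refine Finset.sum_congr rfl fun i hi => ?_
        by_cases hi0 : i = 0
        · subst hi0
          simp
        · rw [hesub i (by omega)]
      rw [step]
      have hsplit : Finset.Icc k' q = insert q (Finset.Icc k' (q - 1)) := by
        ext x; simp only [Finset.mem_Icc, Finset.mem_insert]; omega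
      rw [hsplit, Finset.sum_insert (by simp only [Finset.mem_Icc]; omega)]
      have hz : ((q * (q - 1) : ℕ) : F) = 0 := by rw [Nat.cast_mul, hqF, zero_mul]
      rw [hz, zero_smul, zero_add]
    rw [hA, hB, ← Finset.sum_add_distrib, yInv, Finset.smul_sum, hmap, Finset.sum_map]
    refine Finset.sum_congr rfl fun i hi => ?_
    simp only [Finset.mem_Icc] at hi
    simp only [Function.Embedding.coeFn_mk]
    have e2 : q + (k' + 1) - (i + 1) = q + k' - i := by omega
    rw [e2, ← add_smul, ← Nat.cast_add]
    congr 1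
    have e3 : (q + k' - (i + 1)) * (q - 1) + i * (q - 1) = (q + k' - 1) * (q - 1) := by
      rw [← add_mul]
      congr 1
      omega
    rw [e3, Nat.cast_mul, Nat.cast_sub (by omega : 1 ≤ q + k'), Nat.cast_sub hq1]
    push_cast [hqF]
    ring
  rw [key, ← Ideal.Quotient.mkₐ_eq_mk F, map_smul]
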